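/- arXiv:1207.5339 — 4 statements merged into one kernel-verified Lean document; each statement's English description precedes it below -/
import Mathlib

section
/- Let x, y, z be rational numbers satisfying 1 + x² = y² + z², and suppose x ≠ z. Then there exist rational numbers a and b with a ≠ b such that x = (a·b + 1)/(a − b), y = (a + b)/(a − b), and z = (a·b − 1)/(a − b). -/
theorem stmt_0 (x y z : ℚ) (h : 1 + x^2 = y^2 + z^2) (hxz : x ≠ z) :
    ∃ a b : ℚ, a ≠ b ∧ x = (a * b + 1) / (a - b) ∧ y = (a + b) / (a - b) ∧
      z = (a * b - 1) / (a - b) := by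
  have hdz : x - z ≠ 0 := sub_ne_zero.mpr hxz
  refine ⟨(y + 1) / (x - z), (y - 1) / (x - z), ?_, ?_, ?_, ?_⟩
  · intro heq
    field_simp at heq
    linarith
  · field_simp
    linear_combination h
  · field_simp
    ring
  · field_simp
    linear_combination h
end

section
/- Let x, y, z be rational numbers satisfying 4x² + (y² + 1 − z²)² = 8y². Then either there exist signs ε, δ, σ ∈ {1, −1} such that x = ε·y and x = δ·z + σ (i.e. the point lies on one of the 8 lines x = ±y = ±z ± 1), or else there exist rational numbers b and c with b²c² + 2b² − 3b²c + c − bc² + 2b ≠ 0 such that x = −b(c² + 2 − 4c)/(b²c² + 2b² − 3b²c + c − bc² + 2b), y = −b(c² + 2 − 2c)/(b²c² + 2b² − 3b²c + c − bc² + 2b), and z = −(b²c² + 2b² − 3b²c − c)/(b²c² + 2b² − 3b²c + c − bc² + 2b). -/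
set_option maxHeartbeats 4000000 in

theorem stmt_2 (x y z : ℚ) (h : 4 * x^2 + (y^2 + 1 - z^2)^2 = 8 * y^2) :
    (∃ ε δ σ : ℚ, (ε = 1 ∨ ε = -1) ∧ (δ = 1 ∨ δ = -1) ∧ (σ = 1 ∨ σ = -1) ∧
      x = ε * y ∧ x = δ * z + σ) ∨
    (∃ b c : ℚ,
      b^2 * c^2 + 2 * b^2 - 3 * b^2 * c + c - b * c^2 + 2 * b ≠ 0 ∧
      x = -(b * (c^2 + 2 - 4 * c)) /
        (b^2 * c^2 + 2 * b^2 - 3 * b^2 * c + c - b * c^2 + 2 * b) ∧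
      y = -(b * (c^2 + 2 - 2 * c)) /
        (b^2 * c^2 + 2 * b^2 - 3 * b^2 * c + c - b * c^2 + 2 * b) ∧
      z = -(b^2 * c^2 + 2 * b^2 - 3 * b^2 * c - c) /
        (b^2 * c^2 + 2 * b^2 - 3 * b^2 * c + c - b * c^2 + 2 * b)) := by
  by_cases hxy : x = y
  · subst hxy
    left
    have h4 : (x - 1 - z) * (x - 1 + z) * ((x + 1 - z) * (x + 1 + z)) = 0 := by
      linear_combination h
    rcases mul_eq_zero.mp h4 with h5 | h5
    · rcases mul_eq_zero.mp h5 with h6 | h6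
      · exact ⟨1, 1, 1, Or.inl rfl, Or.inl rfl, Or.inl rfl, by ring, by linarith⟩
      · exact ⟨1, -1, 1, Or.inl rfl, Or.inr rfl, Or.inl rfl, by ring, by linarith⟩
    · rcases mul_eq_zero.mp h5 with h6 | h6
      · exact ⟨1, 1, -1, Or.inl rfl, Or.inl rfl, Or.inr rfl, by ring, by linarith⟩
      · exact ⟨1, -1, -1, Or.inl rfl, Or.inr rfl, Or.inr rfl, by ring, by linarith⟩
  by_cases hxny : x = -y
  · subst hxny
    left
    have h4 : (y - 1 - z) * (y - 1 + z) * ((y + 1 - z) * (y + 1 + z)) = 0 := by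
      linear_combination h
    rcases mul_eq_zero.mp h4 with h5 | h5
    · rcases mul_eq_zero.mp h5 with h6 | h6
      · exact ⟨-1, -1, -1, Or.inr rfl, Or.inr rfl, Or.inr rfl, by ring, by linarith⟩
      · exact ⟨-1, 1, -1, Or.inr rfl, Or.inl rfl, Or.inr rfl, by ring, by linarith⟩
    · rcases mul_eq_zero.mp h5 with h6 | h6
      · exact ⟨-1, -1, 1, Or.inr rfl, Or.inr rfl, Or.inl rfl, by ring, by linarith⟩
      · exact ⟨-1, 1, 1, Or.inr rfl, Or.inl rfl, Or.inl rfl, by ring, by linarith⟩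
  right
  have hu : x - y ≠ 0 := sub_ne_zero.mpr hxy
  have hv : x + y ≠ 0 := fun hc0 => hxny (by linarith [hc0])
  have hCne : 2*x - 4*y - (y^2+1-z^2) ≠ 0 := by
    intro hc0
    apply hxy
    have hsq : (x - y)^2 = 0 := by
      linear_combination h/8 + ((y^2+1-z^2) + 2*x - 4*y)/8 * hc0
    have := pow_eq_zero_iff (n := 2) (by norm_num) |>.mp hsq
    linarith [sub_eq_zero.mp this]
  have hM : ((2*(x-y))^2*(2*(x+y))^2) ≠ 0 := by positivity
  obtain ⟨b, hbdef⟩ : ∃ t : ℚ, t = (2*z - 2 + (y^2+1-z^2)) / (2*(x+y)) := ⟨_, rfl⟩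
  obtain ⟨c, hcdef⟩ : ∃ t : ℚ, t = (2*x - 4*y - (y^2+1-z^2)) / (2*(x-y)) := ⟨_, rfl⟩
  have h2v : (2:ℚ)*(x+y) ≠ 0 := by
    intro hc0; apply hv; linarith
  have h2u : (2:ℚ)*(x-y) ≠ 0 := by
    intro hc0; apply hu; linarith
  have hb : 2*(x+y)*b = 2*z - 2 + (y^2+1-z^2) := by
    rw [hbdef, mul_div_cancel₀ _ h2v]
  have hc : 2*(x-y)*c = 2*x - 4*y - (y^2+1-z^2) := by
    rw [hcdef, mul_div_cancel₀ _ h2u]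
  have hkey0 : ((b^2*c^2+2*b^2-3*b^2*c+c-b*c^2+2*b) * ((2*z+2-(y^2+1-z^2))*(x-y)) - 2*(2*x - 4*y - (y^2+1-z^2))) * ((2*(x-y))^2*(2*(x+y))^2) = 0 := by
    linear_combination ((8)*y^3 + (-12)*y^3*c + (4)*y^3*c^2 + (-16)*y^3*z^2 + (24)*y^3*z^2*c + (-8)*y^3*z^2*c^2 + (8)*y^3*z^4 + (-12)*y^3*z^4*c + (4)*y^3*z^4*c^2 + (-16)*y^4 + (8)*y^4*c^2 + (-16)*y^4*b + (24)*y^4*b*c + (-8)*y^4*b*c^2 + (-32)*y^4*z + (16)*y^4*z*c^2 + (-32)*y^4*z*b + (48)*y^4*z*b*c + (-16)*y^4*z*b*c^2 + (-16)*y^4*z^2 + (8)*y^4*z^2*c^2 + (-16)*y^4*z^2*b + (24)*y^4*z^2*b*c + (-8)*y^4*z^2*b*c^2 + (-16)*y^5 + (24)*y^5*c + (-8)*y^5*c^2 + (-16)*y^5*z^2 + (24)*y^5*z^2*c + (-8)*y^5*z^2*c^2 + (16)*y^6 + (-8)*y^6*c^2 + (16)*y^6*b + (-24)*y^6*b*c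 + (8)*y^6*b*c^2 + (8)*y^7 + (-12)*y^7*c + (4)*y^7*c^2 + (-24)*x*y^2 + (36)*x*y^2*c + (-12)*x*y^2*c^2 + (48)*x*y^2*z^2 + (-72)*x*y^2*z^2*c + (24)*x*y^2*z^2*c^2 + (-24)*x*y^2*z^4 + (36)*x*y^2*z^4*c + (-12)*x*y^2*z^4*c^2 + (32)*x*y^3 + (-16)*x*y^3*c^2 + (32)*x*y^3*b + (-48)*x*y^3*b*c + (16)*x*y^3*b*c^2 + (64)*x*y^3*z + (-32)*x*y^3*z*c^2 + (64)*x*y^3*z*b + (-96)*x*y^3*z*b*c + (32)*x*y^3*z*b*c^2 + (32)*x*y^3*z^2 + (-16)*x*y^3*z^2*c^2 + (32)*x*y^3*z^2*b + (-48)*x*y^3*z^2*b*c + (16)*x*y^3*z^2*b*c^2 + (48)*x*y^4 + (-72)*x*y^4*c + (24)*x*y^4*c^2 + (48)*x*y^4*z^2 + (-72)*x*y^4*z^2*c + (24)*x*y^4*z^2*c^2 + (-32)*x*y^5 + (16)*x*y^5*c^2 + (-32)*x*y^5*b + (48)*x*y^5*b*c + (-16)*x*y^5*b*c^2 + (-24)*x*y^6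 + (36)*x*y^6*c + (-12)*x*y^6*c^2 + (24)*x^2*y + (-36)*x^2*y*c + (12)*x^2*y*c^2 + (-48)*x^2*y*z^2 + (72)*x^2*y*z^2*c + (-24)*x^2*y*z^2*c^2 + (24)*x^2*y*z^4 + (-36)*x^2*y*z^4*c + (12)*x^2*y*z^4*c^2 + (-48)*x^2*y^3 + (72)*x^2*y^3*c + (-24)*x^2*y^3*c^2 + (-48)*x^2*y^3*z^2 + (72)*x^2*y^3*z^2*c + (-24)*x^2*y^3*z^2*c^2 + (24)*x^2*y^5 + (-36)*x^2*y^5*c + (12)*x^2*y^5*c^2 + (-8)*x^3 + (12)*x^3*c + (-4)*x^3*c^2 + (16)*x^3*z^2 + (-24)*x^3*z^2*c + (8)*x^3*z^2*c^2 + (-8)*x^3*z^4 + (12)*x^3*z^4*c + (-4)*x^3*z^4*c^2 + (-32)*x^3*y + (16)*x^3*y*c^2 + (-32)*x^3*y*b + (48)*x^3*y*b*c + (-16)*x^3*y*b*c^2 + (-64)*x^3*y*z + (32)*x^3*y*z*c^2 + (-64)*x^3*y*z*b + (96)*x^3*y*z*b*c + (-32)*x^3*y*z*b*c^2 + (-32)*x^3*y*z^2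 + (16)*x^3*y*z^2*c^2 + (-32)*x^3*y*z^2*b + (48)*x^3*y*z^2*b*c + (-16)*x^3*y*z^2*b*c^2 + (16)*x^3*y^2 + (-24)*x^3*y^2*c + (8)*x^3*y^2*c^2 + (16)*x^3*y^2*z^2 + (-24)*x^3*y^2*z^2*c + (8)*x^3*y^2*z^2*c^2 + (32)*x^3*y^3 + (-16)*x^3*y^3*c^2 + (32)*x^3*y^3*b + (-48)*x^3*y^3*b*c + (16)*x^3*y^3*b*c^2 + (-8)*x^3*y^4 + (12)*x^3*y^4*c + (-4)*x^3*y^4*c^2 + (16)*x^4 + (-8)*x^4*c^2 + (16)*x^4*b + (-24)*x^4*b*c + (8)*x^4*b*c^2 + (32)*x^4*z + (-16)*x^4*z*c^2 + (32)*x^4*z*b + (-48)*x^4*z*b*c + (16)*x^4*z*b*c^2 + (16)*x^4*z^2 + (-8)*x^4*z^2*c^2 + (16)*x^4*z^2*b + (-24)*x^4*z^2*b*c + (8)*x^4*z^2*b*c^2 + (-16)*x^4*y^2 + (8)*x^4*y^2*c^2 + (-16)*x^4*y^2*b + (24)*x^4*y^2*b*c + (-8)*x^4*y^2*b*c^2)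 * hb + ((1)*y + (-2)*y*z + (-2)*y*z^2 + (6)*y*z^3 + (-6)*y*z^5 + (2)*y*z^6 + (2)*y*z^7 + (-1)*y*z^8 + (2)*y^2*c + (4)*y^2*z + (-4)*y^2*z*c + (-4)*y^2*z^2 + (-2)*y^2*z^2*c + (-8)*y^2*z^3 + (8)*y^2*z^3*c + (8)*y^2*z^4 + (-2)*y^2*z^4*c + (4)*y^2*z^5 + (-4)*y^2*z^5*c + (-4)*y^2*z^6 + (2)*y^2*z^6*c + (6)*y^3 + (4)*y^3*c + (2)*y^3*z + (-16)*y^3*z^2 + (-8)*y^3*z^2*c + (4)*y^3*z^3 + (6)*y^3*z^4 + (4)*y^3*z^4*c + (-6)*y^3*z^5 + (4)*y^3*z^6 + (12)*y^4 + (-6)*y^4*c + (8)*y^4*z + (8)*y^4*z*c + (8)*y^4*z^2 + (-4)*y^4*z^2*c + (-8)*y^4*z^3 + (8)*y^4*z^3*c + (12)*y^4*z^4 + (-6)*y^4*z^4*c + (-16)*y^5 + (-8)*y^5*c + (2)*y^5*z + (-18)*y^5*z^2 + (-8)*y^5*z^2*c + (6)*y^5*z^3 + (-6)*y^5*z^4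 + (-16)*y^6 + (6)*y^6*c + (4)*y^6*z + (-4)*y^6*z*c + (-12)*y^6*z^2 + (6)*y^6*z^2*c + (10)*y^7 + (4)*y^7*c + (-2)*y^7*z + (4)*y^7*z^2 + (4)*y^8 + (-2)*y^8*c + (-1)*y^9 + (-1)*x + (2)*x*z + (2)*x*z^2 + (-6)*x*z^3 + (6)*x*z^5 + (-2)*x*z^6 + (-2)*x*z^7 + (1)*x*z^8 + (6)*x*y + (-4)*x*y*c + (-12)*x*y*z + (8)*x*y*z*c + (-6)*x*y*z^2 + (4)*x*y*z^2*c + (24)*x*y*z^3 + (-16)*x*y*z^3*c + (-6)*x*y*z^4 + (4)*x*y*z^4*c + (-12)*x*y*z^5 + (8)*x*y*z^5*c + (6)*x*y*z^6 + (-4)*x*y*z^6*c + (-2)*x*y^2 + (-4)*x*y^2*c + (-2)*x*y^2*z + (8)*x*y^2*z^2 + (8)*x*y^2*z^2*c + (-4)*x*y^2*z^3 + (-2)*x*y^2*z^4 + (-4)*x*y^2*z^4*c + (6)*x*y^2*z^5 + (-4)*x*y^2*z^6 + (-18)*x*y^3 + (12)*x*y^3*c + (24)*x*y^3*z + (-16)*x*y^3*z*c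 + (-12)*x*y^3*z^2 + (8)*x*y^3*z^2*c + (24)*x*y^3*z^3 + (-16)*x*y^3*z^3*c + (-18)*x*y^3*z^4 + (12)*x*y^3*z^4*c + (8)*x*y^4 + (8)*x*y^4*c + (-2)*x*y^4*z + (10)*x*y^4*z^2 + (8)*x*y^4*z^2*c + (-6)*x*y^4*z^3 + (6)*x*y^4*z^4 + (18)*x*y^5 + (-12)*x*y^5*c + (-12)*x*y^5*z + (8)*x*y^5*z*c + (18)*x*y^5*z^2 + (-12)*x*y^5*z^2*c + (-6)*x*y^6 + (-4)*x*y^6*c + (2)*x*y^6*z + (-4)*x*y^6*z^2 + (-6)*x*y^7 + (4)*x*y^7*c + (1)*x*y^8 + (-6)*x^2 + (2)*x^2*c + (8)*x^2*z + (-4)*x^2*z*c + (10)*x^2*z^2 + (-2)*x^2*z^2*c + (-16)*x^2*z^3 + (8)*x^2*z^3*c + (-2)*x^2*z^4 + (-2)*x^2*z^4*c + (8)*x^2*z^5 + (-4)*x^2*z^5*c + (-2)*x^2*z^6 + (2)*x^2*z^6*c + (-8)*x^2*y + (-4)*x^2*y*c + (16)*x^2*y*z^2 + (8)*x^2*y*z^2*c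 + (-8)*x^2*y*z^4 + (-4)*x^2*y*z^4*c + (-2)*x^2*y^2 + (-6)*x^2*y^2*c + (-48)*x^2*y^2*z + (8)*x^2*y^2*z*c + (-4)*x^2*y^2*z^2 + (-4)*x^2*y^2*z^2*c + (-16)*x^2*y^2*z^3 + (8)*x^2*y^2*z^3*c + (6)*x^2*y^2*z^4 + (-6)*x^2*y^2*z^4*c + (16)*x^2*y^3 + (8)*x^2*y^3*c + (16)*x^2*y^3*z^2 + (8)*x^2*y^3*z^2*c + (6)*x^2*y^4 + (6)*x^2*y^4*c + (8)*x^2*y^4*z + (-4)*x^2*y^4*z*c + (-6)*x^2*y^4*z^2 + (6)*x^2*y^4*z^2*c + (-8)*x^2*y^5 + (-4)*x^2*y^5*c + (2)*x^2*y^6 + (-2)*x^2*y^6*c + (4)*x^3 + (4)*x^3*c + (-8)*x^3*z^2 + (-8)*x^3*z^2*c + (4)*x^3*z^4 + (4)*x^3*z^4*c + (-8)*x^3*y^2 + (-8)*x^3*y^2*c + (-8)*x^3*y^2*z^2 + (-8)*x^3*y^2*z^2*c + (4)*x^3*y^4 + (4)*x^3*y^4*c + (8)*x^4 + (16)*x^4*z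 + (8)*x^4*z^2 + (-8)*x^4*y^2) * hc + ((-1)*y + (2)*y*z + (1)*y*z^2 + (-4)*y*z^3 + (1)*y*z^4 + (2)*y*z^5 + (-1)*y*z^6 + (-4)*y^2 + (4)*y^2*z + (4)*y^2*z^2 + (-4)*y^2*z^3 + (-21)*y^3 + (12)*y^3*z + (10)*y^3*z^2 + (-4)*y^3*z^3 + (3)*y^3*z^4 + (-12)*y^4 + (4)*y^4*z + (-11)*y^5 + (2)*y^5*z + (-3)*y^5*z^2 + (1)*y^7 + (1)*x + (-2)*x*z + (-1)*x*z^2 + (4)*x*z^3 + (-1)*x*z^4 + (-2)*x*z^5 + (1)*x*z^6 + (9)*x*y^2 + (-4)*x*y^2*z + (-6)*x*y^2*z^2 + (4)*x*y^2*z^3 + (-3)*x*y^2*z^4 + (7)*x*y^4 + (-2)*x*y^4*z + (3)*x*y^4*z^2 + (-1)*x*y^6 + (4)*x^2 + (-4)*x^2*z + (-4)*x^2*z^2 + (4)*x^2*z^3 + (24)*x^2*y + (-16)*x^2*y*z + (-8)*x^2*y*z^2 + (12)*x^2*y^2 + (-4)*x^2*y^2*z + (8)*x^2*y^3 + (-12)*x^3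 + (8)*x^3*z + (4)*x^3*z^2 + (-4)*x^3*y^2) * h
  have hkey : (b^2*c^2+2*b^2-3*b^2*c+c-b*c^2+2*b) * ((2*z+2-(y^2+1-z^2))*(x-y)) = 2*(2*x - 4*y - (y^2+1-z^2)) := by
    rcases mul_eq_zero.mp hkey0 with h1 | h1
    · linarith [h1]
    · exact absurd h1 hM
  have hDne : (b^2*c^2+2*b^2-3*b^2*c+c-b*c^2+2*b) ≠ 0 := by
    intro hD0
    rw [hD0, zero_mul] at hkey
    apply hCne
    linarith [hkey]
  refine ⟨b, c, hDne, ?_, ?_, ?_⟩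
  · rw [eq_div_iff hDne]
    have hx0 : (x * (b^2*c^2+2*b^2-3*b^2*c+c-b*c^2+2*b) + b*(c^2+2-4*c)) * ((2*(x-y))^2*(2*(x+y))^2) = 0 := by
      linear_combination ((16)*y^3 + (-32)*y^3*c + (8)*y^3*c^2 + (-24)*x*y^2 + (44)*x*y^2*c + (-12)*x*y^2*c^2 + (16)*x*y^2*z + (-24)*x*y^2*z*c + (8)*x*y^2*z*c^2 + (-8)*x*y^2*z^2 + (12)*x*y^2*z^2*c + (-4)*x*y^2*z^2*c^2 + (16)*x*y^3 + (-8)*x*y^3*c^2 + (16)*x*y^3*b + (-24)*x*y^3*b*c + (8)*x*y^3*b*c^2 + (8)*x*y^4 + (-12)*x*y^4*c + (4)*x*y^4*c^2 + (8)*x^2*y*c + (-32)*x^2*y*z + (48)*x^2*y*z*c + (-16)*x^2*y*z*c^2 + (16)*x^2*y*z^2 + (-24)*x^2*y*z^2*c + (8)*x^2*y*z^2*c^2 + (-16)*x^2*y^2 + (8)*x^2*y^2*c^2 + (-16)*x^2*y^2*b + (24)*x^2*y^2*b*c + (-8)*x^2*y^2*b*c^2 + (-16)*x^2*y^3 + (24)*x^2*y^3*c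 + (-8)*x^2*y^3*c^2 + (8)*x^3 + (-20)*x^3*c + (4)*x^3*c^2 + (16)*x^3*z + (-24)*x^3*z*c + (8)*x^3*z*c^2 + (-8)*x^3*z^2 + (12)*x^3*z^2*c + (-4)*x^3*z^2*c^2 + (-16)*x^3*y + (8)*x^3*y*c^2 + (-16)*x^3*y*b + (24)*x^3*y*b*c + (-8)*x^3*y*b*c^2 + (8)*x^3*y^2 + (-12)*x^3*y^2*c + (4)*x^3*y^2*c^2 + (16)*x^4 + (-8)*x^4*c^2 + (16)*x^4*b + (-24)*x^4*b*c + (8)*x^4*b*c^2) * hb + ((2)*y + (-4)*y*z + (4)*y*z^3 + (-2)*y*z^4 + (-8)*y^2 + (4)*y^2*c + (16)*y^2*z + (-8)*y^2*z*c + (-8)*y^2*z^2 + (4)*y^2*z^2*c + (-4)*y^3*z + (4)*y^3*z^2 + (8)*y^4 + (-4)*y^4*c + (-2)*y^5 + (1)*x + (-5)*x*z^2 + (4)*x*z^3 + (3)*x*z^4 + (-4)*x*z^5 + (1)*x*z^6 + (4)*x*y + (-2)*x*y*c + (-12)*x*y*z + (8)*x*y*z*c + (16)*x*y*z^2 + (-12)*x*y*z^2*c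 + (-12)*x*y*z^3 + (8)*x*y*z^3*c + (4)*x*y*z^4 + (-2)*x*y*z^4*c + (-7)*x*y^2 + (-4)*x*y^2*c + (12)*x*y^2*z + (8)*x*y^2*z*c + (-10)*x*y^2*z^2 + (-4)*x*y^2*z^2*c + (8)*x*y^2*z^3 + (-3)*x*y^2*z^4 + (-16)*x*y^3 + (4)*x*y^3*c + (12)*x*y^3*z + (-8)*x*y^3*z*c + (-8)*x*y^3*z^2 + (4)*x*y^3*z^2*c + (7)*x*y^4 + (4)*x*y^4*c + (-4)*x*y^4*z + (3)*x*y^4*z^2 + (4)*x*y^5 + (-2)*x*y^5*c + (-1)*x*y^6 + (6)*x^2 + (-2)*x^2*c + (-4)*x^2*z + (-12)*x^2*z^2 + (8)*x^2*z^2*c + (12)*x^2*z^3 + (-8)*x^2*z^3*c + (-2)*x^2*z^4 + (2)*x^2*z^4*c + (-4)*x^2*y + (8)*x^2*y*z + (-4)*x^2*y*z^2 + (-12)*x^2*y^2 + (-12)*x^2*y^2*z + (8)*x^2*y^2*z*c + (4)*x^2*y^2*z^2 + (-4)*x^2*y^2*z^2*c + (4)*x^2*y^3 + (-2)*x^2*y^4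 + (2)*x^2*y^4*c + (4)*x^3 + (4)*x^3*c + (-8)*x^3*z + (-8)*x^3*z*c + (4)*x^3*z^2 + (4)*x^3*z^2*c + (8)*x^3*y + (-4)*x^3*y^2 + (-4)*x^3*y^2*c + (8)*x^4) * hc + ((-2)*y + (4)*y*z + (-2)*y*z^2 + (2)*y^3 + (-1)*x + (4)*x*z^2 + (-4)*x*z^3 + (1)*x*z^4 + (-4)*x*y + (4)*x*y*z + (-8)*x*y^2 + (4)*x*y^2*z + (-2)*x*y^2*z^2 + (1)*x*y^4 + (-4)*x^2 + (4)*x^2*z + (-4)*x^2*y + (4)*x^3) * h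
    rcases mul_eq_zero.mp hx0 with h1 | h1
    · linarith [h1]
    · exact absurd h1 hM
  · rw [eq_div_iff hDne]
    have hy0 : (y * (b^2*c^2+2*b^2-3*b^2*c+c-b*c^2+2*b) + b*(c^2+2-2*c)) * ((2*(x-y))^2*(2*(x+y))^2) = 0 := by
      linear_combination ((8)*y^3 + (-4)*y^3*c + (4)*y^3*c^2 + (16)*y^3*z + (-24)*y^3*z*c + (8)*y^3*z*c^2 + (-8)*y^3*z^2 + (12)*y^3*z^2*c + (-4)*y^3*z^2*c^2 + (16)*y^4 + (-8)*y^4*c^2 + (16)*y^4*b + (-24)*y^4*b*c + (8)*y^4*b*c^2 + (8)*y^5 + (-12)*y^5*c + (4)*y^5*c^2 + (-8)*x*y^2*c + (-32)*x*y^2*z + (48)*x*y^2*z*c + (-16)*x*y^2*z*c^2 + (16)*x*y^2*z^2 + (-24)*x*y^2*z^2*c + (8)*x*y^2*z^2*c^2 + (-16)*x*y^3 + (8)*x*y^3*c^2 + (-16)*x*y^3*b + (24)*x*y^3*b*c + (-8)*x*y^3*b*c^2 + (-16)*x*y^4 + (24)*x*y^4*c + (-8)*x*y^4*c^2 + (-24)*x^2*y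 + (28)*x^2*y*c + (-12)*x^2*y*c^2 + (16)*x^2*y*z + (-24)*x^2*y*z*c + (8)*x^2*y*z*c^2 + (-8)*x^2*y*z^2 + (12)*x^2*y*z^2*c + (-4)*x^2*y*z^2*c^2 + (-16)*x^2*y^2 + (8)*x^2*y^2*c^2 + (-16)*x^2*y^2*b + (24)*x^2*y^2*b*c + (-8)*x^2*y^2*b*c^2 + (8)*x^2*y^3 + (-12)*x^2*y^3*c + (4)*x^2*y^3*c^2 + (16)*x^3 + (-16)*x^3*c + (8)*x^3*c^2 + (16)*x^3*y + (-8)*x^3*y*c^2 + (16)*x^3*y*b + (-24)*x^3*y*b*c + (8)*x^3*y*b*c^2) * hb + ((1)*y + (-5)*y*z^2 + (4)*y*z^3 + (3)*y*z^4 + (-4)*y*z^5 + (1)*y*z^6 + (2)*y^2*c + (-4)*y^2*z + (12)*y^2*z^2 + (-8)*y^2*z^2*c + (-12)*y^2*z^3 + (8)*y^2*z^3*c + (4)*y^2*z^4 + (-2)*y^2*z^4*c + (-7)*y^3 + (-4)*y^3*c + (12)*y^3*z + (8)*y^3*z*c + (-10)*y^3*z^2 + (-4)*y^3*z^2*c +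 (8)*y^3*z^3 + (-3)*y^3*z^4 + (-12)*y^4 + (12)*y^4*z + (-8)*y^4*z*c + (-8)*y^4*z^2 + (4)*y^4*z^2*c + (7)*y^5 + (4)*y^5*c + (-4)*y^5*z + (3)*y^5*z^2 + (4)*y^6 + (-2)*y^6*c + (-1)*y^7 + (2)*x + (-4)*x*z + (4)*x*z^3 + (-2)*x*z^4 + (-2)*x*y + (2)*x*y*c + (12)*x*y*z + (-8)*x*y*z*c + (-20)*x*y*z^2 + (12)*x*y*z^2*c + (12)*x*y*z^3 + (-8)*x*y*z^3*c + (-2)*x*y*z^4 + (2)*x*y*z^4*c + (-4)*x*y^2 + (4)*x*y^2*z + (-4)*x*y^3 + (-4)*x*y^3*c + (-12)*x*y^3*z + (8)*x*y^3*z*c + (4)*x*y^3*z^2 + (-4)*x*y^3*z^2*c + (2)*x*y^4 + (-2)*x*y^5 + (2)*x*y^5*c + (4)*x^2 + (-4)*x^2*c + (-8)*x^2*z + (8)*x^2*z*c + (4)*x^2*z^2 + (-4)*x^2*z^2*c + (4)*x^2*y + (4)*x^2*y*c + (-8)*x^2*y*z + (-8)*x^2*y*z*c + (4)*x^2*y*z^2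 + (4)*x^2*y*z^2*c + (4)*x^2*y^2 + (4)*x^2*y^2*c + (-4)*x^2*y^3 + (-4)*x^2*y^3*c + (8)*x^3*y) * hc + ((-1)*y + (4)*y*z^2 + (-4)*y*z^3 + (1)*y*z^4 + (-4)*y^2 + (4)*y^2*z + (-8)*y^3 + (4)*y^3*z + (-2)*y^3*z^2 + (1)*y^5 + (-2)*x + (4)*x*z + (-2)*x*z^2 + (-4)*x*y + (4)*x*y*z + (-2)*x*y^2 + (4)*x^2*y) * h
    rcases mul_eq_zero.mp hy0 with h1 | h1
    · linarith [h1]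
    · exact absurd h1 hM
  · rw [eq_div_iff hDne]
    have hz0 : (z * (b^2*c^2+2*b^2-3*b^2*c+c-b*c^2+2*b) + (b^2*c^2+2*b^2-3*b^2*c-c)) * ((2*(x-y))^2*(2*(x+y))^2) = 0 := by
      linear_combination ((-8)*y^2 + (12)*y^2*c + (-4)*y^2*c^2 + (8)*y^2*z + (-12)*y^2*z*c + (4)*y^2*z*c^2 + (8)*y^2*z^2 + (-12)*y^2*z^2*c + (4)*y^2*z^2*c^2 + (-8)*y^2*z^3 + (12)*y^2*z^3*c + (-4)*y^2*z^3*c^2 + (16)*y^3*b + (-24)*y^3*b*c + (8)*y^3*b*c^2 + (16)*y^3*z + (-8)*y^3*z*c^2 + (16)*y^3*z*b + (-24)*y^3*z*b*c + (8)*y^3*z*b*c^2 + (8)*y^4 + (-12)*y^4*c + (4)*y^4*c^2 + (8)*y^4*z + (-12)*y^4*z*c + (4)*y^4*z*c^2 + (16)*x*y + (-24)*x*y*c + (8)*x*y*c^2 + (-16)*x*y*z + (24)*x*y*z*c + (-8)*x*y*z*c^2 + (-16)*x*y*z^2 + (24)*x*y*z^2*c + (-8)*x*y*z^2*c^2 +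 (16)*x*y*z^3 + (-24)*x*y*z^3*c + (8)*x*y*z^3*c^2 + (-16)*x*y^2*b + (24)*x*y^2*b*c + (-8)*x*y^2*b*c^2 + (-16)*x*y^2*z + (8)*x*y^2*z*c^2 + (-16)*x*y^2*z*b + (24)*x*y^2*z*b*c + (-8)*x*y^2*z*b*c^2 + (-16)*x*y^3 + (24)*x*y^3*c + (-8)*x*y^3*c^2 + (-16)*x*y^3*z + (24)*x*y^3*z*c + (-8)*x*y^3*z*c^2 + (-8)*x^2 + (12)*x^2*c + (-4)*x^2*c^2 + (8)*x^2*z + (-12)*x^2*z*c + (4)*x^2*z*c^2 + (8)*x^2*z^2 + (-12)*x^2*z^2*c + (4)*x^2*z^2*c^2 + (-8)*x^2*z^3 + (12)*x^2*z^3*c + (-4)*x^2*z^3*c^2 + (-16)*x^2*y*b + (24)*x^2*y*b*c + (-8)*x^2*y*b*c^2 + (-16)*x^2*y*z + (8)*x^2*y*z*c^2 + (-16)*x^2*y*z*b + (24)*x^2*y*z*b*c + (-8)*x^2*y*z*b*c^2 + (8)*x^2*y^2 + (-12)*x^2*y^2*c + (4)*x^2*y^2*c^2 + (8)*x^2*y^2*z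 + (-12)*x^2*y^2*z*c + (4)*x^2*y^2*z*c^2 + (16)*x^3*b + (-24)*x^3*b*c + (8)*x^3*b*c^2 + (16)*x^3*z + (-8)*x^3*z*c^2 + (16)*x^3*z*b + (-24)*x^3*z*b*c + (8)*x^3*z*b*c^2) * hb + ((-1) + (3)*z + (-1)*z^2 + (-5)*z^3 + (5)*z^4 + (1)*z^5 + (-3)*z^6 + (1)*z^7 + (2)*y + (-2)*y*c + (-8)*y*z + (6)*y*z*c + (8)*y*z^2 + (-4)*y*z^2*c + (4)*y*z^3 + (-4)*y*z^3*c + (-10)*y*z^4 + (6)*y*z^4*c + (4)*y*z^5 + (-2)*y*z^5*c + (1)*y^2 + (-7)*y^2*z + (-4)*y^2*z*c + (10)*y^2*z^2 + (8)*y^2*z^2*c + (-6)*y^2*z^3 + (-4)*y^2*z^3*c + (5)*y^2*z^4 + (-3)*y^2*z^5 + (4)*y^3 + (4)*y^3*c + (-4)*y^3*z + (-4)*y^3*z*c + (8)*y^3*z^2 + (-4)*y^3*z^2*c + (-8)*y^3*z^3 + (4)*y^3*z^3*c + (1)*y^4 + (5)*y^4*z + (4)*y^4*z*c + (-1)*y^4*z^2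 + (3)*y^4*z^3 + (2)*y^5 + (-2)*y^5*c + (4)*y^5*z + (-2)*y^5*z*c + (-1)*y^6 + (-1)*y^6*z + (-4)*x + (2)*x*c + (10)*x*z + (-6)*x*z*c + (-4)*x*z^2 + (4)*x*z^2*c + (-8)*x*z^3 + (4)*x*z^3*c + (8)*x*z^4 + (-6)*x*z^4*c + (-2)*x*z^5 + (2)*x*z^5*c + (-4)*x*y*z + (8)*x*y*z^2 + (-4)*x*y*z^3 + (16)*x*y^2 + (-4)*x*y^2*c + (-16)*x*y^2*z + (4)*x*y^2*z*c + (-4)*x*y^2*z^2 + (4)*x*y^2*z^2*c + (4)*x*y^2*z^3 + (-4)*x*y^2*z^3*c + (4)*x*y^3*z + (-4)*x*y^4 + (2)*x*y^4*c + (-2)*x*y^4*z + (2)*x*y^4*z*c + (4)*x^2*z + (4)*x^2*z*c + (-8)*x^2*z^2 + (-8)*x^2*z^2*c + (4)*x^2*z^3 + (4)*x^2*z^3*c + (-8)*x^2*y + (8)*x^2*y*z + (-4)*x^2*y^2*z + (-4)*x^2*y^2*z*c + (-8)*x^3 + (8)*x^3*z) * hc + ((1) + (-3)*z + (2)*z^2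 + (2)*z^3 + (-3)*z^4 + (1)*z^5 + (2)*y + (-4)*y*z + (2)*y*z^2 + (6)*y^2 + (-6)*y^2*z + (2)*y^2*z^2 + (-2)*y^2*z^3 + (2)*y^3 + (1)*y^4 + (1)*y^4*z + (2)*x + (-4)*x*z + (2)*x*z^2 + (4)*x*y + (-4)*x*y*z + (2)*x*y^2 + (-4)*x^2 + (4)*x^2*z) * h
    rcases mul_eq_zero.mp hz0 with h1 | h1
    · linarith [h1]
    · exact absurd h1 hM
end

section
/- Let b and c be rational numbers such that the denominator D = b²c² + 2b² − 3b²c + c − bc² + 2b is nonzero, and define x = −b(c² + 2 − 4c)/D, y = −b(c² + 2 − 2c)/D, z = −(b²c² + 2b² − 3b²c − c)/D. Then 4x² + (y² + 1 − z²)² = 8y². -/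
theorem stmt_3 (b c : ℚ)
    (hD : b^2 * c^2 + 2 * b^2 - 3 * b^2 * c + c - b * c^2 + 2 * b ≠ 0)
    (x y z : ℚ)
    (hx : x = -(b * (c^2 + 2 - 4 * c)) /
      (b^2 * c^2 + 2 * b^2 - 3 * b^2 * c + c - b * c^2 + 2 * b))
    (hy : y = -(b * (c^2 + 2 - 2 * c)) /
      (b^2 * c^2 + 2 * b^2 - 3 * b^2 * c + c - b * c^2 + 2 * b))
    (hz : z = -(b^2 * c^2 + 2 * b^2 - 3 * b^2 * c - c) /
      (b^2 * c^2 + 2 * b^2 - 3 * b^2 * c + c - b * c^2 + 2 * b)) :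
    4 * x^2 + (y^2 + 1 - z^2)^2 = 8 * y^2 := by
  subst hx hy hz; generalize hd : b^2 * c^2 + 2 * b^2 - 3 * b^2 * c + c - b * c^2 + 2 * b = D at *
  field_simp
  subst hd
  ring
end

section
/- Let x, y, z be rational numbers satisfying 4x² + (y² + 1 − z²)² = 8y², and define u = (y² + 1 − z²)/2. Suppose u − z − 1 ≠ 0 and (x − u)(y + x) + (u + 3x)(y − x) ≠ 0, and define b = (y − x)/(u − z − 1) and c = 4x(y − x)/((x − u)(y + x) + (u + 3x)(y − x)). If the denominator D = b²c² + 2b² − 3b²c + c − bc² + 2b is nonzero, then x = −b(c² + 2 − 4c)/D, y = −b(c² + 2 − 2c)/D, and z = −(b²c² + 2b² − 3b²c − c)/D; that is, the parametrization of the theorem recovers the original point (x, y, z). -/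
theorem stmt_8 (x y z : ℚ) (h : 4 * x^2 + (y^2 + 1 - z^2)^2 = 8 * y^2)
    (u : ℚ) (hu : u = (y^2 + 1 - z^2) / 2)
    (h1 : u - z - 1 ≠ 0)
    (h2 : (x - u) * (y + x) + (u + 3 * x) * (y - x) ≠ 0)
    (b c : ℚ) (hb : b = (y - x) / (u - z - 1))
    (hc : c = 4 * x * (y - x) / ((x - u) * (y + x) + (u + 3 * x) * (y - x)))
    (hD : b^2 * c^2 + 2 * b^2 - 3 * b^2 * c + c - b * c^2 + 2 * b ≠ 0) :
    x = -(b * (c^2 + 2 - 4 * c)) /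
      (b^2 * c^2 + 2 * b^2 - 3 * b^2 * c + c - b * c^2 + 2 * b) ∧
    y = -(b * (c^2 + 2 - 2 * c)) /
      (b^2 * c^2 + 2 * b^2 - 3 * b^2 * c + c - b * c^2 + 2 * b) ∧
    z = -(b^2 * c^2 + 2 * b^2 - 3 * b^2 * c - c) /
      (b^2 * c^2 + 2 * b^2 - 3 * b^2 * c + c - b * c^2 + 2 * b) := by
  have hb' : b * (u - z - 1) = y - x := by
    rw [hb, div_mul_cancel₀ _ h1]
  have hc' : c * ((x - u) * (y + x) + (u + 3 * x) * (y - x)) = 4 * x * (y - x) := by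
    rw [hc, div_mul_cancel₀ _ h2]
  have hu' : 2 * u = y^2 + 1 - z^2 := by rw [hu]; ring
  have hK : (8:ℚ) * ((x - u) * (y + x) + (u + 3 * x) * (y - x))^2 * (u - z - 1)^2 ≠ 0 := by
    positivity
  refine ⟨?_, ?_, ?_⟩ <;> rw [eq_div_iff hD]
  · apply mul_left_cancel₀ hK
    linear_combination (((-256)*x^2*y^2 + (-256)*x^2*y^2*z + 256*x^3*y + 256*x^3*y*z + (-256)*x^3*y^2 + (-256)*x^3*y^2*z + 256*x^3*y^3 + (-64)*x^4 + (-64)*x^4*z + 256*x^4*y + 256*x^4*y*z + (-512)*x^4*y^2 + (-64)*x^5 + (-64)*x^5*z + 320*x^5*y + (-64)*x^6 + 256*u*x^2*y + 256*u*x^2*y*z + 256*u*x^2*y^2 + (-128)*u*x^3 + (-128)*u*x^3*z + 256*u*x^3*y*z + (-64)*u*x^4 + (-128)*u*x^4*z + 128*u*x^4*y + (-64)*u*x^5 + (-64)*u^2*x^2 + (-64)*u^2*x^2*z + (-256)*u^2*x^2*y + 64*u^2*x^3 + (-64)*u^2*x^3*z + (-192)*u^2*x^3*y + 64*u^2*x^4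 + 64*u^3*x^2 + 64*u^3*x^3 + 512*c*x^2*y^2 + 512*c*x^2*y^2*z + (-512)*c*x^3*y + (-512)*c*x^3*y*z + (-384)*c*x^3*y^3 + 128*c*x^4 + 128*c*x^4*z + 768*c*x^4*y^2 + (-480)*c*x^5*y + 96*c*x^6 + (-512)*c*u*x^2*y + (-512)*c*u*x^2*y*z + (-512)*c*u*x^2*y^2 + 256*c*u*x^3 + 256*c*u*x^3*z + 512*c*u*x^3*y + 384*c*u*x^3*y^2 + (-128)*c*u*x^4 + (-576)*c*u*x^4*y + 192*c*u*x^5 + 128*c*u^2*x^2 + 128*c*u^2*x^2*z + 512*c*u^2*x^2*y + (-256)*c*u^2*x^3 + (-96)*c*u^2*x^3*y + 96*c*u^2*x^4 + (-128)*c*u^3*x^2 + (-128)*c^2*x^2*y^2 + (-128)*c^2*x^2*y^2*z + 128*c^2*x^3*y + 128*c^2*x^3*y*z + 128*c^2*x^3*y^2 + 128*c^2*x^3*y^2*z + 128*c^2*x^3*y^3 + (-32)*c^2*x^4 + (-32)*c^2*x^4*z + (-128)*c^2*x^4*y + (-128)*c^2*x^4*y*z + (-256)*c^2*x^4*y^2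 + 32*c^2*x^5 + 32*c^2*x^5*z + 160*c^2*x^5*y + (-32)*c^2*x^6 + 128*c^2*u*x^2*y + 128*c^2*u*x^2*y*z + 128*c^2*u*x^2*y^2 + (-64)*c^2*u*x^3 + (-64)*c^2*u*x^3*z + (-256)*c^2*u*x^3*y + (-128)*c^2*u*x^3*y*z + (-256)*c^2*u*x^3*y^2 + 96*c^2*u*x^4 + 64*c^2*u*x^4*z + 320*c^2*u*x^4*y + (-96)*c^2*u*x^5 + (-32)*c^2*u^2*x^2 + (-32)*c^2*u^2*x^2*z + (-128)*c^2*u^2*x^2*y + 96*c^2*u^2*x^3 + 32*c^2*u^2*x^3*z + 160*c^2*u^2*x^3*y + (-96)*c^2*u^2*x^4 + 32*c^2*u^3*x^2 + (-32)*c^2*u^3*x^3 + (-256)*b*x^3*y^2 + (-256)*b*x^3*y^2*z + 256*b*x^4*y + 256*b*x^4*y*z + (-64)*b*x^5 + (-64)*b*x^5*z + 256*b*u*x^3*y + 256*b*u*x^3*y*z + 256*b*u*x^3*y^2 + (-128)*b*u*x^4 + (-128)*b*u*x^4*z + (-256)*b*u*x^4*y + 64*b*u*x^5 + (-64)*b*u^2*x^3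 + (-64)*b*u^2*x^3*z + (-256)*b*u^2*x^3*y + 128*b*u^2*x^4 + 64*b*u^3*x^3 + 384*b*c*x^3*y^2 + 384*b*c*x^3*y^2*z + (-384)*b*c*x^4*y + (-384)*b*c*x^4*y*z + 96*b*c*x^5 + 96*b*c*x^5*z + (-384)*b*c*u*x^3*y + (-384)*b*c*u*x^3*y*z + (-384)*b*c*u*x^3*y^2 + 192*b*c*u*x^4 + 192*b*c*u*x^4*z + 384*b*c*u*x^4*y + (-96)*b*c*u*x^5 + 96*b*c*u^2*x^3 + 96*b*c*u^2*x^3*z + 384*b*c*u^2*x^3*y + (-192)*b*c*u^2*x^4 + (-96)*b*c*u^3*x^3 + (-128)*b*c^2*x^3*y^2 + (-128)*b*c^2*x^3*y^2*z + 128*b*c^2*x^4*y + 128*b*c^2*x^4*y*z + (-32)*b*c^2*x^5 + (-32)*b*c^2*x^5*z + 128*b*c^2*u*x^3*y + 128*b*c^2*u*x^3*y*z + 128*b*c^2*u*x^3*y^2 + (-64)*b*c^2*u*x^4 + (-64)*b*c^2*u*x^4*z + (-128)*b*c^2*u*x^4*y + 32*b*c^2*u*x^5 + (-32)*b*c^2*u^2*x^3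 + (-32)*b*c^2*u^2*x^3*z + (-128)*b*c^2*u^2*x^3*y + 64*b*c^2*u^2*x^4 + 32*b*c^2*u^3*x^3) * hb' + (96*x*y^2 + 96*x*y^2*z + (-96)*x^2*y + (-64)*x^2*y*z + 32*x^2*y*z^2 + 32*x^2*y^2 + 32*x^2*y^2*z + (-64)*x^2*y^3 + 16*x^3 + (-16)*x^3*z^2 + (-64)*x^3*y + (-64)*x^3*y*z + 144*x^3*y^2 + 32*x^4 + 32*x^4*z + (-96)*x^4*y + 16*x^5 + (-64)*u*x*y + (-64)*u*x*y*z + (-96)*u*x*y^2 + 48*u*x^2 + 32*u*x^2*z + (-16)*u*x^2*z^2 + 64*u*x^2*y + (-64)*u*x^2*y*z + 16*u*x^2*y^2 + 32*u*x^3*z + (-32)*u*x^3*y + 16*u*x^4 + 64*u^2*x*y + (-32)*u^2*x^2 + 32*u^2*x^2*z + 32*u^2*x^2*y + (-16)*u^2*x^3 + (-16)*u^3*x^2 + (-32)*c*x*y^2 + (-32)*c*x*y^2*z + 48*c*x^2*y + 48*c*x^2*y*z + 32*c*x^2*y^2 + 32*c*x^2*y^2*z + 32*c*x^2*y^3 +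 (-16)*c*x^3 + (-16)*c*x^3*z + (-48)*c*x^3*y + (-48)*c*x^3*y*z + (-80)*c*x^3*y^2 + 16*c*x^4 + 16*c*x^4*z + 64*c*x^4*y + (-16)*c*x^5 + 16*c*u*x*y + 16*c*u*x*y*z + 32*c*u*x*y^2 + (-16)*c*u*x^2 + (-16)*c*u*x^2*z + (-64)*c*u*x^2*y + (-16)*c*u*x^2*y*z + (-48)*c*u*x^2*y^2 + 32*c*u*x^3 + 16*c*u*x^3*z + 80*c*u*x^3*y + (-32)*c*u*x^4 + (-16)*c*u^2*x*y + 16*c*u^2*x^2 + 16*c*u^2*x^2*y + (-16)*c*u^2*x^3) * hc' + ((-8)*x^2*y + (-16)*x^2*y*z + 16*x^2*y*z^3 + 8*x^2*y*z^4 + (-64)*x^2*y^3 + (-16)*x^2*y^3*z + (-16)*x^2*y^3*z^2 + 8*x^2*y^5 + 8*x^3 + 16*x^3*z + (-16)*x^3*z^3 + (-8)*x^3*z^4 + 16*x^3*y + 16*x^3*y*z + (-16)*x^3*y*z^2 + (-16)*x^3*y*z^3 + 176*x^3*y^2 + 16*x^3*y^2*z + 32*x^3*y^2*z^2 + 16*x^3*y^3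 + 16*x^3*y^3*z + (-24)*x^3*y^4 + (-16)*x^4 + (-16)*x^4*z + 16*x^4*z^2 + 16*x^4*z^3 + (-144)*x^4*y + (-16)*x^4*y*z^2 + (-16)*x^4*y^2 + (-16)*x^4*y^2*z + 16*x^4*y^3 + 32*x^5 + (-16)*u*x^2*y + (-32)*u*x^2*y*z + (-16)*u*x^2*y*z^2 + 16*u*x^2*y^3 + 16*u*x^3 + 32*u*x^3*z + 16*u*x^3*z^2 + (-32)*u*x^3*y + 32*u*x^3*y*z + (-48)*u*x^3*y^2 + 32*u*x^4 + (-32)*u*x^4*z + 32*u*x^4*y + 32*u^2*x^2*y + (-32)*u^2*x^3) * hu' + ((-8)*x^2*y + (-16)*x^2*y*z + (-8)*x^2*y*z^2 + 8*x^2*y^3 + 8*x^3 + 16*x^3*z + 8*x^3*z^2 + 16*x^3*y + 16*x^3*y*z + (-24)*x^3*y^2 + (-16)*x^4 + (-16)*x^4*z + 16*x^4*y) * h)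
  · apply mul_left_cancel₀ hK
    linear_combination (((-256)*x^2*y^2 + (-256)*x^2*y^2*z + (-256)*x^2*y^3 + (-256)*x^2*y^3*z + 256*x^2*y^4 + 256*x^3*y + 256*x^3*y*z + 256*x^3*y^2 + 256*x^3*y^2*z + (-512)*x^3*y^3 + (-64)*x^4 + (-64)*x^4*z + (-64)*x^4*y + (-64)*x^4*y*z + 320*x^4*y^2 + (-64)*x^5*y + 256*u*x^2*y + 256*u*x^2*y*z + 512*u*x^2*y^2 + 256*u*x^2*y^2*z + (-128)*u*x^3 + (-128)*u*x^3*z + (-384)*u*x^3*y + (-128)*u*x^3*y*z + 128*u*x^3*y^2 + 64*u*x^4 + (-64)*u*x^4*y + (-64)*u^2*x^2 + (-64)*u^2*x^2*z + (-320)*u^2*x^2*y + (-64)*u^2*x^2*y*z + (-192)*u^2*x^2*y^2 + 128*u^2*x^3 + 64*u^2*x^3*y + 64*u^3*x^2 + 64*u^3*x^2*y + 256*c*x^2*y^2 + 256*c*x^2*y^2*z + (-384)*c*x^2*y^4 + (-256)*c*x^3*y + (-256)*c*x^3*y*z + 768*c*x^3*y^3 + 64*c*x^4 + 64*c*x^4*z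 + (-480)*c*x^4*y^2 + 96*c*x^5*y + (-256)*c*u*x^2*y + (-256)*c*u*x^2*y*z + (-256)*c*u*x^2*y^2 + 384*c*u*x^2*y^3 + 128*c*u*x^3 + 128*c*u*x^3*z + 256*c*u*x^3*y + (-576)*c*u*x^3*y^2 + (-64)*c*u*x^4 + 192*c*u*x^4*y + 64*c*u^2*x^2 + 64*c*u^2*x^2*z + 256*c*u^2*x^2*y + (-96)*c*u^2*x^2*y^2 + (-128)*c*u^2*x^3 + 96*c*u^2*x^3*y + (-64)*c*u^3*x^2 + (-128)*c^2*x^2*y^2 + (-128)*c^2*x^2*y^2*z + 128*c^2*x^2*y^3 + 128*c^2*x^2*y^3*z + 128*c^2*x^2*y^4 + 128*c^2*x^3*y + 128*c^2*x^3*y*z + (-128)*c^2*x^3*y^2 + (-128)*c^2*x^3*y^2*z + (-256)*c^2*x^3*y^3 + (-32)*c^2*x^4 + (-32)*c^2*x^4*z + 32*c^2*x^4*y + 32*c^2*x^4*y*z + 160*c^2*x^4*y^2 + (-32)*c^2*x^5*y + 128*c^2*u*x^2*y + 128*c^2*u*x^2*y*z + (-128)*c^2*u*x^2*y^2*z + (-256)*c^2*u*x^2*y^3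 + (-64)*c^2*u*x^3 + (-64)*c^2*u*x^3*z + (-64)*c^2*u*x^3*y + 64*c^2*u*x^3*y*z + 320*c^2*u*x^3*y^2 + 32*c^2*u*x^4 + (-96)*c^2*u*x^4*y + (-32)*c^2*u^2*x^2 + (-32)*c^2*u^2*x^2*z + (-96)*c^2*u^2*x^2*y + 32*c^2*u^2*x^2*y*z + 160*c^2*u^2*x^2*y^2 + 64*c^2*u^2*x^3 + (-96)*c^2*u^2*x^3*y + 32*c^2*u^3*x^2 + (-32)*c^2*u^3*x^2*y + (-256)*b*x^2*y^3 + (-256)*b*x^2*y^3*z + 256*b*x^3*y^2 + 256*b*x^3*y^2*z + (-64)*b*x^4*y + (-64)*b*x^4*y*z + 256*b*u*x^2*y^2 + 256*b*u*x^2*y^2*z + 256*b*u*x^2*y^3 + (-128)*b*u*x^3*y + (-128)*b*u*x^3*y*z + (-256)*b*u*x^3*y^2 + 64*b*u*x^4*y + (-64)*b*u^2*x^2*y + (-64)*b*u^2*x^2*y*z + (-256)*b*u^2*x^2*y^2 + 128*b*u^2*x^3*y + 64*b*u^3*x^2*y + 384*b*c*x^2*y^3 + 384*b*c*x^2*y^3*z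 + (-384)*b*c*x^3*y^2 + (-384)*b*c*x^3*y^2*z + 96*b*c*x^4*y + 96*b*c*x^4*y*z + (-384)*b*c*u*x^2*y^2 + (-384)*b*c*u*x^2*y^2*z + (-384)*b*c*u*x^2*y^3 + 192*b*c*u*x^3*y + 192*b*c*u*x^3*y*z + 384*b*c*u*x^3*y^2 + (-96)*b*c*u*x^4*y + 96*b*c*u^2*x^2*y + 96*b*c*u^2*x^2*y*z + 384*b*c*u^2*x^2*y^2 + (-192)*b*c*u^2*x^3*y + (-96)*b*c*u^3*x^2*y + (-128)*b*c^2*x^2*y^3 + (-128)*b*c^2*x^2*y^3*z + 128*b*c^2*x^3*y^2 + 128*b*c^2*x^3*y^2*z + (-32)*b*c^2*x^4*y + (-32)*b*c^2*x^4*y*z + 128*b*c^2*u*x^2*y^2 + 128*b*c^2*u*x^2*y^2*z + 128*b*c^2*u*x^2*y^3 + (-64)*b*c^2*u*x^3*y + (-64)*b*c^2*u*x^3*y*z + (-128)*b*c^2*u*x^3*y^2 + 32*b*c^2*u*x^4*y + (-32)*b*c^2*u^2*x^2*y + (-32)*b*c^2*u^2*x^2*y*z + (-128)*b*c^2*u^2*x^2*y^2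 + 64*b*c^2*u^2*x^3*y + 32*b*c^2*u^3*x^2*y) * hb' + (64*x*y^2 + 96*x*y^2*z + 32*x*y^2*z^2 + 32*x*y^3 + 32*x*y^3*z + (-64)*x*y^4 + (-48)*x^2*y + (-64)*x^2*y*z + (-16)*x^2*y*z^2 + (-64)*x^2*y^2 + (-64)*x^2*y^2*z + 144*x^2*y^3 + 32*x^3*y + 32*x^3*y*z + (-96)*x^3*y^2 + 16*x^4*y + (-48)*u*x*y + (-64)*u*x*y*z + (-16)*u*x*y*z^2 + (-96)*u*x*y^2 + (-64)*u*x*y^2*z + 16*u*x*y^3 + 32*u*x^2 + 32*u*x^2*z + 64*u*x^2*y + 32*u*x^2*y*z + (-32)*u*x^2*y^2 + 16*u*x^3*y + 64*u^2*x*y + 32*u^2*x*y*z + 32*u^2*x*y^2 + (-32)*u^2*x^2 + (-16)*u^2*x^2*y + (-16)*u^3*x*y + (-32)*c*x*y^2 + (-32)*c*x*y^2*z + 32*c*x*y^3 + 32*c*x*y^3*z + 32*c*x*y^4 + 48*c*x^2*y + 48*c*x^2*y*z + (-48)*c*x^2*y^2 + (-48)*c*x^2*y^2*z + (-80)*c*x^2*y^3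 + (-16)*c*x^3 + (-16)*c*x^3*z + 16*c*x^3*y + 16*c*x^3*y*z + 64*c*x^3*y^2 + (-16)*c*x^4*y + 16*c*u*x*y + 16*c*u*x*y*z + 16*c*u*x*y^2 + (-16)*c*u*x*y^2*z + (-48)*c*u*x*y^3 + (-16)*c*u*x^2 + (-16)*c*u*x^2*z + (-32)*c*u*x^2*y + 16*c*u*x^2*y*z + 80*c*u*x^2*y^2 + 16*c*u*x^3 + (-32)*c*u*x^3*y + (-16)*c*u^2*x*y + 16*c*u^2*x*y^2 + 16*c*u^2*x^2 + (-16)*c*u^2*x^2*y) * hc' + ((-8)*x^2*y + (-16)*x^2*y*z + 16*x^2*y*z^3 + 8*x^2*y*z^4 + 16*x^2*y^2 + 16*x^2*y^2*z + (-16)*x^2*y^2*z^2 + (-16)*x^2*y^2*z^3 + 48*x^2*y^3 + (-16)*x^2*y^3*z + 16*x^2*y^4 + 16*x^2*y^4*z + (-8)*x^2*y^5 + 8*x^3 + 16*x^3*z + (-16)*x^3*z^3 + (-8)*x^3*z^4 + (-16)*x^3*y + (-16)*x^3*y*z + 16*x^3*y*z^2 + 16*x^3*y*z^3 + (-112)*x^3*y^2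 + 16*x^3*y^2*z + (-16)*x^3*y^3 + (-16)*x^3*y^3*z + 8*x^3*y^4 + 96*x^4*y + (-32)*x^5 + (-16)*u*x^2*y + (-32)*u*x^2*y*z + (-16)*u*x^2*y*z^2 + (-32)*u*x^2*y^2 + 32*u*x^2*y^2*z + (-16)*u*x^2*y^3 + 16*u*x^3 + 32*u*x^3*z + 16*u*x^3*z^2 + 32*u*x^3*y + (-32)*u*x^3*y*z + 16*u*x^3*y^2 + 32*u^2*x^2*y + (-32)*u^2*x^3) * hu' + ((-8)*x^2*y + (-16)*x^2*y*z + (-8)*x^2*y*z^2 + 16*x^2*y^2 + 16*x^2*y^2*z + (-8)*x^2*y^3 + 8*x^3 + 16*x^3*z + 8*x^3*z^2 + (-16)*x^3*y + (-16)*x^3*y*z + 8*x^3*y^2) * h)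
  · apply mul_left_cancel₀ hK
    linear_combination (((-256)*x^2*y^2*z + (-256)*x^2*y^2*z^2 + 256*x^2*y^3 + 256*x^2*y^3*z + 256*x^3*y*z + 256*x^3*y*z^2 + (-512)*x^3*y^2 + (-512)*x^3*y^2*z + (-64)*x^4*z + (-64)*x^4*z^2 + 320*x^4*y + 320*x^4*y*z + (-64)*x^5 + (-64)*x^5*z + 256*u*x^2*y*z + 256*u*x^2*y*z^2 + (-256)*u*x^2*y^2 + (-128)*u*x^3*z + (-128)*u*x^3*z^2 + 384*u*x^3*y + 128*u*x^3*y*z + (-128)*u*x^4 + (-64)*u*x^4*z + (-64)*u^2*x^2*z + (-64)*u^2*x^2*z^2 + 64*u^2*x^2*y + (-192)*u^2*x^2*y*z + (-64)*u^2*x^3 + 64*u^2*x^3*z + 64*u^3*x^2*z + (-384)*c*x^2*y^3 + (-384)*c*x^2*y^3*z + 768*c*x^3*y^2 + 768*c*x^3*y^2*z + (-480)*c*x^4*y + (-480)*c*x^4*y*z + 96*c*x^5 + 96*c*x^5*z + 384*c*u*x^2*y^2 + 384*c*u*x^2*y^2*z + (-576)*c*u*x^3*y + (-576)*c*u*x^3*y*z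 + 192*c*u*x^4 + 192*c*u*x^4*z + (-96)*c*u^2*x^2*y + (-96)*c*u^2*x^2*y*z + 96*c*u^2*x^3 + 96*c*u^2*x^3*z + 128*c^2*x^2*y^2*z + 128*c^2*x^2*y^2*z^2 + 128*c^2*x^2*y^3 + 128*c^2*x^2*y^3*z + (-128)*c^2*x^3*y*z + (-128)*c^2*x^3*y*z^2 + (-256)*c^2*x^3*y^2 + (-256)*c^2*x^3*y^2*z + 32*c^2*x^4*z + 32*c^2*x^4*z^2 + 160*c^2*x^4*y + 160*c^2*x^4*y*z + (-32)*c^2*x^5 + (-32)*c^2*x^5*z + (-128)*c^2*u*x^2*y*z + (-128)*c^2*u*x^2*y*z^2 + (-128)*c^2*u*x^2*y^2 + (-256)*c^2*u*x^2*y^2*z + 64*c^2*u*x^3*z + 64*c^2*u*x^3*z^2 + 192*c^2*u*x^3*y + 320*c^2*u*x^3*y*z + (-64)*c^2*u*x^4 + (-96)*c^2*u*x^4*z + 32*c^2*u^2*x^2*z + 32*c^2*u^2*x^2*z^2 + 32*c^2*u^2*x^2*y + 160*c^2*u^2*x^2*y*z + (-32)*c^2*u^2*x^3 + (-96)*c^2*u^2*x^3*z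 + (-32)*c^2*u^3*x^2*z + (-256)*b*x^2*y^2 + (-512)*b*x^2*y^2*z + (-256)*b*x^2*y^2*z^2 + 256*b*x^3*y + 512*b*x^3*y*z + 256*b*x^3*y*z^2 + (-64)*b*x^4 + (-128)*b*x^4*z + (-64)*b*x^4*z^2 + 256*b*u*x^2*y + 512*b*u*x^2*y*z + 256*b*u*x^2*y*z^2 + 256*b*u*x^2*y^2 + 256*b*u*x^2*y^2*z + (-128)*b*u*x^3 + (-256)*b*u*x^3*z + (-128)*b*u*x^3*z^2 + (-256)*b*u*x^3*y + (-256)*b*u*x^3*y*z + 64*b*u*x^4 + 64*b*u*x^4*z + (-64)*b*u^2*x^2 + (-128)*b*u^2*x^2*z + (-64)*b*u^2*x^2*z^2 + (-256)*b*u^2*x^2*y + (-256)*b*u^2*x^2*y*z + 128*b*u^2*x^3 + 128*b*u^2*x^3*z + 64*b*u^3*x^2 + 64*b*u^3*x^2*z + 384*b*c*x^2*y^2 + 768*b*c*x^2*y^2*z + 384*b*c*x^2*y^2*z^2 + (-384)*b*c*x^3*y + (-768)*b*c*x^3*y*z + (-384)*b*c*x^3*y*z^2 + 96*b*c*x^4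 + 192*b*c*x^4*z + 96*b*c*x^4*z^2 + (-384)*b*c*u*x^2*y + (-768)*b*c*u*x^2*y*z + (-384)*b*c*u*x^2*y*z^2 + (-384)*b*c*u*x^2*y^2 + (-384)*b*c*u*x^2*y^2*z + 192*b*c*u*x^3 + 384*b*c*u*x^3*z + 192*b*c*u*x^3*z^2 + 384*b*c*u*x^3*y + 384*b*c*u*x^3*y*z + (-96)*b*c*u*x^4 + (-96)*b*c*u*x^4*z + 96*b*c*u^2*x^2 + 192*b*c*u^2*x^2*z + 96*b*c*u^2*x^2*z^2 + 384*b*c*u^2*x^2*y + 384*b*c*u^2*x^2*y*z + (-192)*b*c*u^2*x^3 + (-192)*b*c*u^2*x^3*z + (-96)*b*c*u^3*x^2 + (-96)*b*c*u^3*x^2*z + (-128)*b*c^2*x^2*y^2 + (-256)*b*c^2*x^2*y^2*z + (-128)*b*c^2*x^2*y^2*z^2 + 128*b*c^2*x^3*y + 256*b*c^2*x^3*y*z + 128*b*c^2*x^3*y*z^2 + (-32)*b*c^2*x^4 + (-64)*b*c^2*x^4*z + (-32)*b*c^2*x^4*z^2 + 128*b*c^2*u*x^2*y + 256*b*c^2*u*x^2*y*z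 + 128*b*c^2*u*x^2*y*z^2 + 128*b*c^2*u*x^2*y^2 + 128*b*c^2*u*x^2*y^2*z + (-64)*b*c^2*u*x^3 + (-128)*b*c^2*u*x^3*z + (-64)*b*c^2*u*x^3*z^2 + (-128)*b*c^2*u*x^3*y + (-128)*b*c^2*u*x^3*y*z + 32*b*c^2*u*x^4 + 32*b*c^2*u*x^4*z + (-32)*b*c^2*u^2*x^2 + (-64)*b*c^2*u^2*x^2*z + (-32)*b*c^2*u^2*x^2*z^2 + (-128)*b*c^2*u^2*x^2*y + (-128)*b*c^2*u^2*x^2*y*z + 64*b*c^2*u^2*x^3 + 64*b*c^2*u^2*x^3*z + 32*b*c^2*u^3*x^2 + 32*b*c^2*u^3*x^2*z) * hb' + ((-32)*x*y + (-32)*x*y*z + 32*x*y*z^2 + 32*x*y*z^3 + 32*x*y^2*z + 32*x*y^2*z^2 + (-64)*x*y^3 + (-64)*x*y^3*z + 16*x^2 + 16*x^2*z + (-16)*x^2*z^2 + (-16)*x^2*z^3 + (-64)*x^2*y*z + (-64)*x^2*y*z^2 + 144*x^2*y^2 + 144*x^2*y^2*z + 32*x^3*z + 32*x^3*z^2 +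 (-96)*x^3*y + (-96)*x^3*y*z + 16*x^4 + 16*x^4*z + 16*u*x + 16*u*x*z + (-16)*u*x*z^2 + (-16)*u*x*z^3 + 64*u*x*y + (-64)*u*x*y*z^2 + 48*u*x*y^2 + 16*u*x*y^2*z + (-32)*u*x^2 + 32*u*x^2*z^2 + (-96)*u*x^2*y + (-32)*u*x^2*y*z + 48*u*x^3 + 16*u*x^3*z + (-32)*u^2*x + 32*u^2*x*z^2 + (-32)*u^2*x*y + 32*u^2*x*y*z + 16*u^2*x^2 + (-16)*u^2*x^2*z + 16*u^3*x + (-16)*u^3*x*z + 32*c*x*y^2*z + 32*c*x*y^2*z^2 + 32*c*x*y^3 + 32*c*x*y^3*z + (-48)*c*x^2*y*z + (-48)*c*x^2*y*z^2 + (-80)*c*x^2*y^2 + (-80)*c*x^2*y^2*z + 16*c*x^3*z + 16*c*x^3*z^2 + 64*c*x^3*y + 64*c*x^3*y*z + (-16)*c*x^4 + (-16)*c*x^4*z + (-16)*c*u*x*y*z + (-16)*c*u*x*y*z^2 + (-16)*c*u*x*y^2 + (-48)*c*u*x*y^2*z + 16*c*u*x^2*z + 16*c*u*x^2*z^2 +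 32*c*u*x^2*y + 80*c*u*x^2*y*z + (-16)*c*u*x^3 + (-32)*c*u*x^3*z + 16*c*u^2*x*y*z + (-16)*c*u^2*x^2*z) * hc' + (8*x^2*y + 16*x^2*y*z + (-16)*x^2*y*z^3 + (-8)*x^2*y*z^4 + 112*x^2*y^2 + 112*x^2*y^2*z + 16*x^2*y^2*z^2 + 16*x^2*y^2*z^3 + (-48)*x^2*y^3 + 16*x^2*y^3*z + (-16)*x^2*y^4 + (-16)*x^2*y^4*z + 8*x^2*y^5 + (-8)*x^3 + (-16)*x^3*z + 16*x^3*z^3 + 8*x^3*z^4 + (-176)*x^3*y + (-176)*x^3*y*z + (-16)*x^3*y*z^2 + (-16)*x^3*y*z^3 + 48*x^3*y^2 + (-16)*x^3*y^2*z + 16*x^3*y^3 + 16*x^3*y^3*z + (-8)*x^3*y^4 + 64*x^4 + 64*x^4*z + 32*x^4*y + (-32)*x^5 + (-48)*u*x^2*y + (-32)*u*x^2*y*z + 16*u*x^2*y*z^2 + (-32)*u*x^2*y^2 + (-32)*u*x^2*y^2*z + 16*u*x^2*y^3 + 48*u*x^3 + 32*u*x^3*z + (-16)*u*x^3*z^2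 + 32*u*x^3*y + 32*u*x^3*y*z + (-16)*u*x^3*y^2 + 32*u^2*x^2*y + (-32)*u^2*x^3) * hu' + (8*x^2*y + 16*x^2*y*z + 8*x^2*y*z^2 + (-16)*x^2*y^2 + (-16)*x^2*y^2*z + 8*x^2*y^3 + (-8)*x^3 + (-16)*x^3*z + (-8)*x^3*z^2 + 16*x^3*y + 16*x^3*y*z + (-8)*x^3*y^2) * h)
end
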